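/- arXiv:2211.09588 — 4 statements merged into one kernel-verified Lean document; each statement's English description precedes it below -/
import Mathlib

section
/- The function h : [0,∞) → ℝ defined by h(y) = 2·ln(2·cosh(√y)) is concave on [0,∞). -/
open Real Set

lemma my_hasDerivAt_tanh (x : ℝ) : HasDerivAt Real.tanh (1 / Real.cosh x ^ 2) x := by
  have h := (Real.hasDerivAt_sinh x).div (Real.hasDerivAt_cosh x) (Real.cosh_pos x).ne'
  have heq : (Real.sinh / Real.cosh) = Real.tanh := by
    funext y; rw [Pi.div_apply, Real.tanh_eq_sinh_div_cosh]
  rw [heq] at h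
  refine h.congr_deriv ?_
  rw [show Real.cosh x * Real.cosh x - Real.sinh x * Real.sinh x = 1 by
    have := Real.cosh_sq_sub_sinh_sq x; ring_nf; ring_nf at this; linarith]

lemma tanh_concaveOn : ConcaveOn ℝ (Set.Ici (0:ℝ)) Real.tanh := by
  apply AntitoneOn.concaveOn_of_deriv (convex_Ici 0)
    (fun y _ => (my_hasDerivAt_tanh y).continuousAt.continuousWithinAt)
    (fun y _ => (my_hasDerivAt_tanh y).differentiableAt.differentiableWithinAt)
  rw [interior_Ici]
  intro x hx y hy hxy
  rw [(my_hasDerivAt_tanh x).deriv, (my_hasDerivAt_tanh y).deriv]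
  have hc : Real.cosh x ≤ Real.cosh y := by
    have := Real.cosh_lt_cosh (x := x) (y := y)
    rcases eq_or_lt_of_le hxy with h | h
    · simp [h]
    · exact le_of_lt (this.mpr (by rw [abs_of_pos hx, abs_of_pos hy]; exact h))
  have h1 : (0:ℝ) < Real.cosh x ^ 2 := by positivity
  have h2 : Real.cosh x ^ 2 ≤ Real.cosh y ^ 2 := by
    apply pow_le_pow_left₀ (Real.cosh_pos x).le hc
  exact one_div_le_one_div_of_le h1 h2

lemma tanh_div_antitoneOn : AntitoneOn (fun t => Real.tanh t / t) (Set.Ioi (0:ℝ)) := by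
  have h := tanh_concaveOn.slope_anti (x := 0) (Set.self_mem_Ici)
  have hsub : Set.Ioi (0:ℝ) ⊆ Set.Ici (0:ℝ) \ {0} := fun t ht =>
    ⟨Set.mem_Ici.mpr (le_of_lt (Set.mem_Ioi.mp ht)),
      fun h0 => (ne_of_gt (Set.mem_Ioi.mp ht)) (Set.mem_singleton_iff.mp h0)⟩
  intro a ha b hb hab
  have := h (hsub ha) (hsub hb) hab
  simpa [slope_def_field, div_eq_inv_mul, mul_comm] using this

lemma hasDerivAt_h {x : ℝ} (hx : 0 < x) :
    HasDerivAt (fun y : ℝ => 2 * Real.log (2 * Real.cosh (Real.sqrt y)))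
      (Real.tanh (Real.sqrt x) / Real.sqrt x) x := by
  have hsx : (0:ℝ) < Real.sqrt x := Real.sqrt_pos.mpr hx
  have h1 : HasDerivAt Real.sqrt (1 / (2 * Real.sqrt x)) x := Real.hasDerivAt_sqrt hx.ne'
  have h2 : HasDerivAt Real.cosh (Real.sinh (Real.sqrt x)) (Real.sqrt x) :=
    Real.hasDerivAt_cosh _
  have h3 := h2.comp x h1
  have h4 := h3.const_mul (2:ℝ)
  have hne : 2 * Real.cosh (Real.sqrt x) ≠ 0 := by positivity
  have h5 := (h4.log hne).const_mul (2:ℝ)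
  refine h5.congr_deriv ?_
  rw [Real.tanh_eq_sinh_div_cosh]
  have hc : Real.cosh (Real.sqrt x) ≠ 0 := (Real.cosh_pos _).ne'
  simp only [Function.comp_apply]
  field_simp

theorem h_concave :
    ConcaveOn ℝ (Set.Ici (0 : ℝ))
      (fun y : ℝ => 2 * Real.log (2 * Real.cosh (Real.sqrt y))) := by
  apply AntitoneOn.concaveOn_of_deriv (convex_Ici 0)
  · -- continuity
    apply Continuous.continuousOn
    apply Continuous.mul continuous_const
    apply Continuous.log
    · exact continuous_const.mul (Real.continuous_cosh.comp Real.continuous_sqrt)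
    · intro y; positivity
  · rw [interior_Ici]
    intro x hx
    exact ((hasDerivAt_h hx).differentiableAt).differentiableWithinAt
  · rw [interior_Ici]
    intro a ha b hb hab
    rw [(hasDerivAt_h ha).deriv, (hasDerivAt_h hb).deriv]
    exact tanh_div_antitoneOn (Real.sqrt_pos.mpr ha) (Real.sqrt_pos.mpr hb)
      (Real.sqrt_le_sqrt hab)
end

section
/- For θ > 0 and a symmetric real matrix T, the minimum of γ ↦ 2(Tr(Tγ) + θ·Tr(S(γ))) over self-adjoint matrices γ with 0 ≤ γ ≤ 1, where S(x) = x·ln x + (1−x)·ln(1−x), is attained uniquely at γ* = (1 + exp(T/θ))⁻¹. -/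
open Matrix

noncomputable def entS (x : ℝ) : ℝ := x * Real.log x + (1 - x) * Real.log (1 - x)

/-- Tr(S(γ)) computed via the eigenvalues of the Hermitian matrix γ. -/
noncomputable def trEnt {L : ℕ} (γ : Matrix (Fin L) (Fin L) ℝ)
    (hγ : γ.IsHermitian) : ℝ := ∑ i, entS (hγ.eigenvalues i)

lemma klem (a b : ℝ) (ha : 0 ≤ a) (hb : 0 < b) :
    0 ≤ a * Real.log a - a * Real.log b - a + b ∧
    (a * Real.log a - a * Real.log b - a + b = 0 → a = b) := by
  rcases eq_or_lt_of_le ha with h0 | hpos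
  · simp only [← h0, zero_mul, sub_zero, zero_sub, neg_add_eq_sub, sub_zero]
    constructor
    · simpa using hb.le
    · intro h; simp at h; linarith
  · have hba : 0 < b / a := div_pos hb hpos
    have key : Real.log (b / a) ≤ b / a - 1 := Real.log_le_sub_one_of_pos hba
    have hlog : Real.log (b / a) = Real.log b - Real.log a := Real.log_div hb.ne' hpos.ne'
    have h1 : a * (Real.log b - Real.log a) ≤ b - a := by
      have := mul_le_mul_of_nonneg_left key hpos.le
      rw [mul_sub, mul_one, mul_div_cancel₀ _ hpos.ne'] at this
      linarith [this, hlog ▸ this]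
    constructor
    · nlinarith [h1]
    · intro heq
      by_contra hne
      have hba1 : b / a ≠ 1 := by
        intro h; apply hne; field_simp at h; linarith
      have key2 : Real.log (b / a) < b / a - 1 := Real.log_lt_sub_one_of_pos hba hba1
      have h2 : a * (Real.log b - Real.log a) < b - a := by
        have := mul_lt_mul_of_pos_left key2 hpos
        rw [mul_sub, mul_one, mul_div_cancel₀ _ hpos.ne'] at this
        rw [← hlog]; linarith
      nlinarith

lemma ptlem (θ t x : ℝ) (hθ : 0 < θ) (hx0 : 0 ≤ x) (hx1 : x ≤ 1) :
    t * (1 + Real.exp (θ⁻¹ * t))⁻¹ + θ * entS ((1 + Real.exp (θ⁻¹ * t))⁻¹)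
      ≤ t * x + θ * entS x ∧
    (t * x + θ * entS x
        = t * (1 + Real.exp (θ⁻¹ * t))⁻¹ + θ * entS ((1 + Real.exp (θ⁻¹ * t))⁻¹)
      → x = (1 + Real.exp (θ⁻¹ * t))⁻¹) := by
  set e := Real.exp (θ⁻¹ * t) with he_def
  have he : 0 < e := Real.exp_pos _
  have h1e : 0 < 1 + e := by linarith
  set μ := (1 + e)⁻¹ with hμ_def
  have hμ0 : 0 < μ := inv_pos.2 h1e
  have hμ1 : μ < 1 := by
    rw [hμ_def, inv_lt_one_iff₀]; right; linarith
  have h1μ : 1 - μ = e / (1 + e) := by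
    rw [hμ_def]; field_simp; ring
  have hlogμ : Real.log μ = -Real.log (1 + e) := by rw [hμ_def, Real.log_inv]
  have hlog1μ : Real.log (1 - μ) = θ⁻¹ * t - Real.log (1 + e) := by
    rw [h1μ, Real.log_div he.ne' h1e.ne', he_def, Real.log_exp]
  have hident : t * x + θ * entS x - (t * μ + θ * entS μ)
      = θ * ((x * Real.log x - x * Real.log μ - x + μ)
           + ((1-x) * Real.log (1-x) - (1-x) * Real.log (1-μ) - (1-x) + (1-μ))) := by
    simp only [entS]
    rw [hlogμ, hlog1μ]
    field_simp
    ring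
  have k1 := klem x μ hx0 hμ0
  have k2 := klem (1-x) (1-μ) (by linarith) (by linarith)
  constructor
  · nlinarith [k1.1, k2.1]
  · intro heq
    have hz : (x * Real.log x - x * Real.log μ - x + μ)
           + ((1-x) * Real.log (1-x) - (1-x) * Real.log (1-μ) - (1-x) + (1-μ)) = 0 := by
      have : θ * ((x * Real.log x - x * Real.log μ - x + μ)
           + ((1-x) * Real.log (1-x) - (1-x) * Real.log (1-μ) - (1-x) + (1-μ))) = 0 := by
        rw [← hident]; linarith
      exact (mul_eq_zero.mp this).resolve_left hθ.ne'
    exact k1.2 (by linarith [k1.1, k2.1])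

lemma conj_diag_apply {L : ℕ} (U : Matrix (Fin L) (Fin L) ℝ) (a : Fin L → ℝ) (k l : Fin L) :
    (U * diagonal a * star U) k l = ∑ i, a i * U k i * U l i := by
  rw [Matrix.mul_apply]
  simp only [Matrix.mul_diagonal, Matrix.star_apply, star_trivial]
  exact Finset.sum_congr rfl fun i _ => by ring

lemma trace_conj_diag {L : ℕ} (U V : Matrix (Fin L) (Fin L) ℝ) (a b : Fin L → ℝ) :
    ((U * diagonal a * star U) * (V * diagonal b * star V)).trace
      = ∑ i, ∑ j, a i * b j * ((star U * V) i j)^2 := by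
  have h2 : (star U * V) * diagonal b * star (star U * V)
      = star U * (V * diagonal b * star V) * U := by
    rw [Matrix.star_mul, star_star]; noncomm_ring
  have h3 : U * diagonal a * star U * (V * diagonal b * star V)
      = U * (diagonal a * (star U * (V * diagonal b * star V))) := by noncomm_ring
  rw [h3, Matrix.trace_mul_comm, Matrix.mul_assoc, ← h2]
  rw [Matrix.trace]
  simp only [Matrix.diag_apply, Matrix.diagonal_mul]
  refine Finset.sum_congr rfl fun i _ => ?_
  rw [conj_diag_apply, Finset.mul_sum]
  exact Finset.sum_congr rfl fun j _ => by ring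

lemma det_sub_conj {L : ℕ} (V : Matrix (Fin L) (Fin L) ℝ) (hV : star V * V = 1)
    (d : Fin L → ℝ) (x : ℝ) :
    (x • (1 : Matrix (Fin L) (Fin L) ℝ) - V * diagonal d * star V).det = ∏ i, (x - d i) := by
  have hV2 : V * star V = 1 := mul_eq_one_comm.mp hV
  have h1 : x • (1 : Matrix (Fin L) (Fin L) ℝ) - V * diagonal d * star V
      = V * (x • (1 : Matrix (Fin L) (Fin L) ℝ) - diagonal d) * star V := by
    rw [Matrix.mul_sub, Matrix.sub_mul, Matrix.mul_smul, mul_one, Matrix.smul_mul, hV2]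
  rw [h1, Matrix.det_mul, Matrix.det_mul]
  have hdet : V.det * (star V).det = 1 := by
    rw [← Matrix.det_mul, hV2, Matrix.det_one]
  have h2 : x • (1 : Matrix (Fin L) (Fin L) ℝ) - diagonal d
      = diagonal (fun i => x - d i) := by
    ext i j
    rcases eq_or_ne i j with h | h <;>
      simp [Matrix.diagonal_apply, h, Matrix.one_apply, Matrix.sub_apply, Matrix.smul_apply]
  rw [h2, Matrix.det_diagonal]
  rw [mul_right_comm, hdet, one_mul]

lemma multiset_eq_of_prods {L : ℕ} (a b : Fin L → ℝ)
    (h : ∀ x : ℝ, ∏ i, (x - a i) = ∏ i, (x - b i)) :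
    (Finset.univ.val.map a) = (Finset.univ.val.map b) := by
  have hP : (∏ i, (Polynomial.X - Polynomial.C (a i)) : Polynomial ℝ)
      = ∏ i, (Polynomial.X - Polynomial.C (b i)) := by
    apply Polynomial.funext
    intro x
    simpa [Polynomial.eval_prod] using h x
  have ha : (∏ i, (Polynomial.X - Polynomial.C (a i)) : Polynomial ℝ)
      = ((Finset.univ.val.map a).map (fun r => Polynomial.X - Polynomial.C r)).prod := by
    rw [Multiset.map_map, Finset.prod_eq_multiset_prod]; rfl
  have hb : (∏ i, (Polynomial.X - Polynomial.C (b i)) : Polynomial ℝ)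
      = ((Finset.univ.val.map b).map (fun r => Polynomial.X - Polynomial.C r)).prod := by
    rw [Multiset.map_map, Finset.prod_eq_multiset_prod]; rfl
  have := congrArg Polynomial.roots hP
  rwa [ha, hb, Polynomial.roots_multiset_prod_X_sub_C,
    Polynomial.roots_multiset_prod_X_sub_C] at this

lemma sum_f_eigen {L : ℕ} (A : Matrix (Fin L) (Fin L) ℝ) (hA : A.IsHermitian)
    (V : Matrix (Fin L) (Fin L) ℝ) (hV : star V * V = 1) (d : Fin L → ℝ)
    (hAd : A = V * diagonal d * star V) (f : ℝ → ℝ) :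
    ∑ i, f (hA.eigenvalues i) = ∑ i, f (d i) := by
  have hspec : A = (hA.eigenvectorUnitary : Matrix (Fin L) (Fin L) ℝ)
      * diagonal hA.eigenvalues * (star hA.eigenvectorUnitary : Matrix (Fin L) (Fin L) ℝ) := by
    simpa using hA.spectral_theorem
  have hU : star (hA.eigenvectorUnitary : Matrix (Fin L) (Fin L) ℝ)
      * (hA.eigenvectorUnitary : Matrix (Fin L) (Fin L) ℝ) = 1 :=
    Unitary.coe_star_mul_self hA.eigenvectorUnitary
  have hprod : ∀ x : ℝ, ∏ i, (x - hA.eigenvalues i) = ∏ i, (x - d i) := by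
    intro x
    rw [← det_sub_conj _ hU hA.eigenvalues x, ← det_sub_conj V hV d x, ← hspec, ← hAd]
  have hms := multiset_eq_of_prods _ _ hprod
  have h1 : ∑ i, f (hA.eigenvalues i) = ((Finset.univ.val.map hA.eigenvalues).map f).sum := by
    rw [Multiset.map_map, Finset.sum_eq_multiset_sum]; rfl
  have h2 : ∑ i, f (d i) = ((Finset.univ.val.map d).map f).sum := by
    rw [Multiset.map_map, Finset.sum_eq_multiset_sum]; rfl
  rw [h1, h2, hms]

lemma psd_diag {L : ℕ} {M : Matrix (Fin L) (Fin L) ℝ} (hM : M.PosSemidef) (i : Fin L) :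
    0 ≤ M i i := by
  exact hM.diag_nonneg

theorem free_energy_min (L : ℕ) (θ : ℝ) (hθ : 0 < θ)
    (T : Matrix (Fin L) (Fin L) ℝ) (hT : T.IsHermitian)
    (γstar : Matrix (Fin L) (Fin L) ℝ)
    (hγstar : γstar = (1 + NormedSpace.exp (θ⁻¹ • T))⁻¹) :
    ∃ hs : γstar.IsHermitian,
      γstar.PosSemidef ∧ (1 - γstar).PosSemidef ∧
      ∀ (γ : Matrix (Fin L) (Fin L) ℝ) (hγ : γ.IsHermitian),
        γ.PosSemidef → (1 - γ).PosSemidef →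
          2 * ((T * γstar).trace + θ * trEnt γstar hs) ≤
            2 * ((T * γ).trace + θ * trEnt γ hγ) ∧
          (2 * ((T * γ).trace + θ * trEnt γ hγ) =
              2 * ((T * γstar).trace + θ * trEnt γstar hs) → γ = γstar) := by
  set t : Fin L → ℝ := hT.eigenvalues with ht_def
  set U : Matrix (Fin L) (Fin L) ℝ := (hT.eigenvectorUnitary : Matrix (Fin L) (Fin L) ℝ)
    with hU_def
  have hU : star U * U = 1 := Unitary.coe_star_mul_self hT.eigenvectorUnitary
  have hU2 : U * star U = 1 := mul_eq_one_comm.mp hU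
  have hTspec : T = U * diagonal t * star U := by
    simpa using hT.spectral_theorem
  set e : Fin L → ℝ := fun i => Real.exp (θ⁻¹ * t i) with he_def
  have he : ∀ i, 0 < e i := fun i => Real.exp_pos _
  set μ : Fin L → ℝ := fun i => (1 + e i)⁻¹ with hμ_def
  have h1e : ∀ i, 0 < 1 + e i := fun i => by linarith [he i]
  have hμ0 : ∀ i, 0 < μ i := fun i => inv_pos.2 (h1e i)
  have hμ1 : ∀ i, μ i < 1 := fun i => by
    rw [hμ_def]; dsimp only
    rw [inv_lt_one_iff₀]; right; linarith [he i]
  -- conjugation multiplication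
  have conjmul : ∀ a b : Fin L → ℝ,
      (U * diagonal a * star U) * (U * diagonal b * star U)
        = U * diagonal (fun i => a i * b i) * star U := by
    intro a b
    have h : U * diagonal a * star U * (U * diagonal b * star U)
        = U * (diagonal a * (star U * U) * diagonal b) * star U := by noncomm_ring
    rw [h, hU, mul_one, Matrix.diagonal_mul_diagonal]
  -- the decomposition of γstar
  have hUunit : IsUnit U := by
    rw [Matrix.isUnit_iff_isUnit_det]
    exact IsUnit.of_mul_eq_one (star U).det (by rw [← Matrix.det_mul, hU2, Matrix.det_one])
  have hUinv : U⁻¹ = star U := Matrix.inv_eq_right_inv hU2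
  have hsm : θ⁻¹ • T = U * diagonal (fun i => θ⁻¹ * t i) * U⁻¹ := by
    rw [hUinv, hTspec]
    have hd : diagonal (fun i => θ⁻¹ * t i) = θ⁻¹ • diagonal t := by
      rw [← Matrix.diagonal_smul]; rfl
    rw [hd, Matrix.mul_smul, Matrix.smul_mul]
  have hexp : NormedSpace.exp (θ⁻¹ • T) = U * diagonal e * star U := by
    have hpe : NormedSpace.exp (fun i => θ⁻¹ * t i) = e := by
      rw [Pi.exp_def]
      funext i
      rw [he_def]
      dsimp only
      rw [Real.exp_eq_exp_ℝ]
    rw [hsm, Matrix.exp_conj U _ hUunit, Matrix.exp_diagonal, hUinv, hpe]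
  have h1exp : (1 : Matrix (Fin L) (Fin L) ℝ) + NormedSpace.exp (θ⁻¹ • T)
      = U * diagonal (fun i => 1 + e i) * star U := by
    rw [hexp]
    have : diagonal (fun i => 1 + e i)
        = (1 : Matrix (Fin L) (Fin L) ℝ) + diagonal e := by
      rw [← Matrix.diagonal_one, Matrix.diagonal_add]
    rw [this, Matrix.mul_add, Matrix.add_mul, Matrix.mul_one, hU2]
  have hγs : γstar = U * diagonal μ * star U := by
    rw [hγstar]
    apply Matrix.inv_eq_left_inv

    rw [h1exp, conjmul]
    have : (fun i => μ i * (1 + e i)) = fun _ => (1 : ℝ) := by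
      funext i
      exact inv_mul_cancel₀ (h1e i).ne'
    rw [this, Matrix.diagonal_one, Matrix.mul_one, hU2]
  -- positivity of γstar and 1 - γstar
  have hpsdstar : γstar.PosSemidef := by
    rw [hγs, Matrix.star_eq_conjTranspose]
    exact (Matrix.PosSemidef.diagonal (fun i => by have := hμ0 i; simp only [Pi.zero_apply]; linarith)).mul_mul_conjTranspose_same U
  have h1mstar : (1 : Matrix (Fin L) (Fin L) ℝ) - γstar
      = U * diagonal (fun i => 1 - μ i) * star U := by
    rw [hγs]
    have : diagonal (fun i => 1 - μ i)
        = (1 : Matrix (Fin L) (Fin L) ℝ) - diagonal μ := by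
      rw [← Matrix.diagonal_one, Matrix.diagonal_sub]
    rw [this, Matrix.mul_sub, Matrix.sub_mul, Matrix.mul_one, hU2]
  have hpsd1star : ((1 : Matrix (Fin L) (Fin L) ℝ) - γstar).PosSemidef := by
    rw [h1mstar, Matrix.star_eq_conjTranspose]
    exact (Matrix.PosSemidef.diagonal (fun i => by have := hμ1 i; simp only [Pi.zero_apply]; linarith)).mul_mul_conjTranspose_same U
  have hs : γstar.IsHermitian := hpsdstar.isHermitian
  refine ⟨hs, hpsdstar, hpsd1star, ?_⟩
  -- trace values at γstar
  have htrs : (T * γstar).trace = ∑ i, t i * μ i := by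
    rw [hTspec, hγs, trace_conj_diag]
    simp only [hU]
    refine Finset.sum_congr rfl fun i _ => ?_
    rw [Finset.sum_eq_single i]
    · simp [Matrix.one_apply]
    · intro j _ hj
      simp [Matrix.one_apply, Ne.symm hj]
    · intro h; exact absurd (Finset.mem_univ i) h
  have htrEnts : trEnt γstar hs = ∑ i, entS (μ i) :=
    sum_f_eigen γstar hs U hU μ hγs entS
  -- now the main inequality
  intro γ hγ hpsd hpsd1
  set lam : Fin L → ℝ := hγ.eigenvalues with hlam_def
  set V : Matrix (Fin L) (Fin L) ℝ := (hγ.eigenvectorUnitary : Matrix (Fin L) (Fin L) ℝ)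
    with hV_def
  have hV : star V * V = 1 := Unitary.coe_star_mul_self hγ.eigenvectorUnitary
  have hV2 : V * star V = 1 := mul_eq_one_comm.mp hV
  have hγspec : γ = V * diagonal lam * star V := by
    simpa using hγ.spectral_theorem
  have hlam0 : ∀ i, 0 ≤ lam i := fun i => hpsd.eigenvalues_nonneg i
  have hlam1 : ∀ i, lam i ≤ 1 := by
    intro i
    have hd : diagonal (fun j => 1 - lam j)
        = star V * ((1 : Matrix (Fin L) (Fin L) ℝ) - γ) * V := by
      rw [hγspec, Matrix.mul_sub, Matrix.sub_mul, Matrix.mul_one, hV]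
      have : star V * (V * diagonal lam * star V) * V
          = (star V * V) * diagonal lam * (star V * V) := by noncomm_ring
      rw [this, hV, Matrix.one_mul, Matrix.mul_one]
      rw [← Matrix.diagonal_one, Matrix.diagonal_sub]
    have hpsdd : (diagonal (fun j => 1 - lam j)).PosSemidef := by
      rw [hd, Matrix.star_eq_conjTranspose]
      exact hpsd1.conjTranspose_mul_mul_same V
    have := psd_diag hpsdd i
    simp [Matrix.diagonal_apply] at this
    linarith
  -- the W matrix
  set W : Matrix (Fin L) (Fin L) ℝ := star U * V with hW_def
  have hWW : W * star W = 1 := by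
    rw [hW_def, Matrix.star_mul, star_star]
    have : star U * V * (star V * U) = star U * (V * star V) * U := by noncomm_ring
    rw [this, hV2, Matrix.mul_one, hU]
  have hWW2 : star W * W = 1 := mul_eq_one_comm.mp hWW
  have hWrow : ∀ i, ∑ j, (W i j)^2 = 1 := by
    intro i
    have h1 : (W * star W) i i = ∑ j, (W i j)^2 := by
      rw [Matrix.mul_apply]
      exact Finset.sum_congr rfl fun j _ => by
        simp [Matrix.star_apply, sq]
    rw [← h1, hWW, Matrix.one_apply_eq]
  have hWcol : ∀ j, ∑ i, (W i j)^2 = 1 := by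
    intro j
    have h1 : (star W * W) j j = ∑ i, (W i j)^2 := by
      rw [Matrix.mul_apply]
      exact Finset.sum_congr rfl fun i _ => by
        simp [Matrix.star_apply, sq]
    rw [← h1, hWW2, Matrix.one_apply_eq]
  have htr : (T * γ).trace = ∑ i, ∑ j, t i * lam j * (W i j)^2 := by
    rw [hTspec, hγspec, trace_conj_diag]
  -- main sum rewrite
  have key : (T * γ).trace + θ * trEnt γ hγ - ((T * γstar).trace + θ * trEnt γstar hs)
      = ∑ i, ∑ j, (W i j)^2
          * ((t i * lam j + θ * entS (lam j)) - (t i * μ i + θ * entS (μ i))) := by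
    have e0 : ∀ i j, (W i j)^2
          * ((t i * lam j + θ * entS (lam j)) - (t i * μ i + θ * entS (μ i)))
        = t i * lam j * (W i j)^2 + (W i j)^2 * (θ * entS (lam j))
          - (W i j)^2 * (t i * μ i + θ * entS (μ i)) := fun i j => by ring
    have e2 : ∑ i, ∑ j, (W i j)^2 * (θ * entS (lam j)) = θ * ∑ j, entS (lam j) := by
      rw [Finset.sum_comm, Finset.mul_sum]
      refine Finset.sum_congr rfl fun j _ => ?_
      rw [← Finset.sum_mul, hWcol j, one_mul]
    have e3 : ∑ i, ∑ j, (W i j)^2 * (t i * μ i + θ * entS (μ i))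
        = ∑ i, (t i * μ i + θ * entS (μ i)) := by
      refine Finset.sum_congr rfl fun i _ => ?_
      rw [← Finset.sum_mul, hWrow i, one_mul]
    calc (T * γ).trace + θ * trEnt γ hγ - ((T * γstar).trace + θ * trEnt γstar hs)
        = (∑ i, ∑ j, t i * lam j * (W i j)^2) + (∑ i, ∑ j, (W i j)^2 * (θ * entS (lam j)))
          - ∑ i, ∑ j, (W i j)^2 * (t i * μ i + θ * entS (μ i)) := by
          rw [htr, htrs, htrEnts, e2, e3, trEnt]
          rw [Finset.mul_sum, Finset.mul_sum, Finset.sum_add_distrib]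
      _ = ∑ i, ∑ j, (W i j)^2
            * ((t i * lam j + θ * entS (lam j)) - (t i * μ i + θ * entS (μ i))) := by
          rw [← Finset.sum_add_distrib, ← Finset.sum_sub_distrib]
          refine Finset.sum_congr rfl fun i _ => ?_
          rw [← Finset.sum_add_distrib, ← Finset.sum_sub_distrib]
          exact Finset.sum_congr rfl fun j _ => (e0 i j).symm
  have hterm : ∀ i j, 0 ≤ (W i j)^2
      * ((t i * lam j + θ * entS (lam j)) - (t i * μ i + θ * entS (μ i))) := by
    intro i j
    apply mul_nonneg (sq_nonneg _)
    have := (ptlem θ (t i) (lam j) hθ (hlam0 j) (hlam1 j)).1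
    simp only [sub_nonneg]
    exact this
  constructor
  · have : 0 ≤ ∑ i, ∑ j, (W i j)^2
        * ((t i * lam j + θ * entS (lam j)) - (t i * μ i + θ * entS (μ i))) :=
      Finset.sum_nonneg fun i _ => Finset.sum_nonneg fun j _ => hterm i j
    linarith [key ▸ this]
  · intro heq
    have hzero : ∑ i, ∑ j, (W i j)^2
        * ((t i * lam j + θ * entS (lam j)) - (t i * μ i + θ * entS (μ i))) = 0 := by
      rw [← key]; linarith
    have hall : ∀ i ∈ Finset.univ, ∀ j ∈ Finset.univ, (W i j)^2
        * ((t i * lam j + θ * entS (lam j)) - (t i * μ i + θ * entS (μ i))) = 0 := by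
      have h1 := (Finset.sum_eq_zero_iff_of_nonneg
        (fun i _ => Finset.sum_nonneg fun j _ => hterm i j)).mp hzero
      intro i hi
      exact (Finset.sum_eq_zero_iff_of_nonneg (fun j _ => hterm i j)).mp (h1 i hi)
    have heig : ∀ i j, W i j ≠ 0 → lam j = μ i := by
      intro i j hWij
      have h0 := hall i (Finset.mem_univ i) j (Finset.mem_univ j)
      have hW2 : (W i j)^2 ≠ 0 := pow_ne_zero _ hWij
      have hdiff : (t i * lam j + θ * entS (lam j)) - (t i * μ i + θ * entS (μ i)) = 0 :=
        (mul_eq_zero.mp h0).resolve_left hW2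
      exact (ptlem θ (t i) (lam j) hθ (hlam0 j) (hlam1 j)).2 (by linarith)
    have hWD : W * diagonal lam * star W = diagonal μ := by
      ext i k
      rw [conj_diag_apply]
      have hsum : ∑ j, lam j * W i j * W k j = ∑ j, μ i * (W i j * W k j) := by
        refine Finset.sum_congr rfl fun j _ => ?_
        rcases eq_or_ne (W i j) 0 with h | h
        · rw [h]; ring
        · rw [heig i j h]; ring
      rw [hsum, ← Finset.mul_sum]
      have h1 : ∑ j, W i j * W k j = (W * star W) i k := by
        rw [Matrix.mul_apply]
        exact Finset.sum_congr rfl fun j _ => by simp [Matrix.star_apply]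
      rw [h1, hWW]
      rcases eq_or_ne i k with h | h
      · simp [h, Matrix.diagonal_apply, Matrix.one_apply]
      · simp [h, Matrix.diagonal_apply, Matrix.one_apply]
    have hUW : U * W = V := by
      rw [hW_def, ← Matrix.mul_assoc, hU2, Matrix.one_mul]
    rw [hγs, ← hWD, hγspec, ← hUW]
    rw [Matrix.star_mul]
    noncomm_ring
end

section
/- Let T be a real symmetric L×L matrix whose spectrum is symmetric with respect to 0 (so Tr(T)=0), and θ > 0. Then min over 0 ≤ γ = γ* ≤ 1 of 2(Tr(Tγ) + θ·Tr(S(γ))) equals −Tr(h_θ(T²)), where h_θ(x) = 2θ·ln(2·cosh(√x/(2θ))) and S(x) = x·ln x + (1−x)·ln(1−x). -/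
open Matrix

noncomputable def hθfun (θ x : ℝ) : ℝ :=
  2 * θ * Real.log (2 * Real.cosh (Real.sqrt x / (2 * θ)))

section Aux

open Polynomial

lemma gibbs {d q : ℝ} (hd0 : 0 ≤ d) (hd1 : d ≤ 1) (hq0 : 0 < q) (hq1 : q < 1) :
    d * Real.log q + (1 - d) * Real.log (1 - q) ≤ entS d := by
  have h1 : d * Real.log q - d * Real.log d ≤ q - d := by
    rcases eq_or_lt_of_le hd0 with h | h
    · simp [← h]; positivity
    · have := Real.log_le_sub_one_of_pos (show 0 < q / d by positivity)
      rw [Real.log_div (ne_of_gt hq0) (ne_of_gt h)] at this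
      calc d * Real.log q - d * Real.log d = d * (Real.log q - Real.log d) := by ring
        _ ≤ d * (q / d - 1) := by nlinarith
        _ = q - d := by field_simp
  have h2 : (1 - d) * Real.log (1 - q) - (1 - d) * Real.log (1 - d) ≤ (1 - q) - (1 - d) := by
    rcases eq_or_lt_of_le hd1 with h | h
    · simp [h]; nlinarith
    · have hd' : 0 < 1 - d := by linarith
      have hq' : 0 < 1 - q := by linarith
      have := Real.log_le_sub_one_of_pos (show 0 < (1 - q) / (1 - d) by positivity)
      rw [Real.log_div (ne_of_gt hq') (ne_of_gt hd')] at this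
      calc (1-d) * Real.log (1-q) - (1-d) * Real.log (1-d)
          = (1-d) * (Real.log (1-q) - Real.log (1-d)) := by ring
        _ ≤ (1-d) * ((1-q)/(1-d) - 1) := by nlinarith
        _ = (1-q) - (1-d) := by field_simp
  unfold entS
  linarith

lemma log_one_sub_q (θ lam : ℝ) (hθ : 0 < θ) :
    Real.log (1 - 1 / (1 + Real.exp (lam / θ))) =
      lam / θ - Real.log (1 + Real.exp (lam / θ)) := by
  have hA : (0:ℝ) < 1 + Real.exp (lam / θ) := by positivity
  have h1 : 1 - 1 / (1 + Real.exp (lam / θ)) = Real.exp (lam / θ) / (1 + Real.exp (lam / θ)) := by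
    field_simp
    ring
  rw [h1, Real.log_div (by positivity) (ne_of_gt hA), Real.log_exp]

lemma log_q (θ lam : ℝ) :
    Real.log (1 / (1 + Real.exp (lam / θ))) = -Real.log (1 + Real.exp (lam / θ)) := by
  rw [Real.log_div one_ne_zero (by positivity), Real.log_one, zero_sub]

lemma neg_log_swap (θ lam : ℝ) (hθ : θ ≠ 0) :
    lam - θ * Real.log (1 + Real.exp (lam / θ)) =
      -θ * Real.log (1 + Real.exp (-lam / θ)) := by
  have h : 1 + Real.exp (lam / θ) = Real.exp (lam / θ) * (1 + Real.exp (-lam / θ)) := by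
    rw [mul_add, mul_one, ← Real.exp_add, show lam / θ + -lam / θ = 0 by ring,
      Real.exp_zero, add_comm]
  rw [h, Real.log_mul (by positivity) (by positivity), Real.log_exp]
  field_simp
  ring

lemma scalar_min (θ lam : ℝ) (hθ : 0 < θ) :
    lam * (1 / (1 + Real.exp (lam / θ))) + θ * entS (1 / (1 + Real.exp (lam / θ))) =
      -θ * Real.log (1 + Real.exp (-lam / θ)) := by
  rw [← neg_log_swap θ lam (ne_of_gt hθ)]
  unfold entS
  rw [log_q θ lam, log_one_sub_q θ lam hθ]
  have hA : (0:ℝ) < 1 + Real.exp (lam / θ) := by positivity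
  field_simp
  ring

lemma scalar_lb (θ lam d : ℝ) (hθ : 0 < θ) (hd0 : 0 ≤ d) (hd1 : d ≤ 1) :
    -θ * Real.log (1 + Real.exp (-lam / θ)) ≤ lam * d + θ * entS d := by
  set q := 1 / (1 + Real.exp (lam / θ)) with hq
  have hA : (1:ℝ) < 1 + Real.exp (lam / θ) := by
    have := Real.exp_pos (lam / θ); linarith
  have hq0 : 0 < q := by positivity
  have hq1 : q < 1 := by rw [hq]; rw [div_lt_one (by linarith)]; linarith
  have hg := gibbs hd0 hd1 hq0 hq1
  have key : lam * d + θ * (d * Real.log q + (1 - d) * Real.log (1 - q)) =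
      -θ * Real.log (1 + Real.exp (-lam / θ)) := by
    rw [← neg_log_swap θ lam (ne_of_gt hθ), hq, log_q θ lam, log_one_sub_q θ lam hθ]
    field_simp
    ring
  nlinarith [hg, hθ.le]

lemma hθfun_sq (θ lam : ℝ) (hθ : 0 < θ) :
    hθfun θ (lam ^ 2) = lam + 2 * θ * Real.log (1 + Real.exp (-lam / θ)) := by
  unfold hθfun
  rw [Real.sqrt_sq_eq_abs]
  have habs : |lam| / (2 * θ) = |lam / (2 * θ)| := by
    rw [abs_div, abs_of_pos (show (0:ℝ) < 2 * θ by positivity)]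
  rw [habs, Real.cosh_abs, Real.cosh_eq]
  have h1 : Real.exp (lam / (2*θ)) + Real.exp (-(lam / (2*θ))) =
      Real.exp (lam / (2*θ)) * (1 + Real.exp (-lam/θ)) := by
    rw [mul_add, mul_one, ← Real.exp_add]
    congr 2
    field_simp
    ring
  rw [show 2 * ((Real.exp (lam / (2 * θ)) + Real.exp (-(lam / (2 * θ)))) / 2)
      = Real.exp (lam / (2*θ)) + Real.exp (-(lam / (2*θ))) by ring, h1,
    Real.log_mul (by positivity) (by positivity), Real.log_exp]
  field_simp

lemma entS_convexOn : ConvexOn ℝ (Set.Icc (0:ℝ) 1) entS := by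
  have h1 : ConvexOn ℝ (Set.Icc (0:ℝ) 1) (fun x => x * Real.log x) :=
    Real.convexOn_mul_log.subset (fun x hx => hx.1) (convex_Icc 0 1)
  have h2 : ConvexOn ℝ (Set.Icc (0:ℝ) 1) (fun x => (1 - x) * Real.log (1 - x)) := by
    refine ⟨convex_Icc 0 1, fun x hx y hy a b ha hb hab => ?_⟩
    have hx' : (1:ℝ) - x ∈ Set.Icc (0:ℝ) 1 := ⟨by linarith [hx.2], by linarith [hx.1]⟩
    have hy' : (1:ℝ) - y ∈ Set.Icc (0:ℝ) 1 := ⟨by linarith [hy.2], by linarith [hy.1]⟩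
    have := h1.2 hx' hy' ha hb hab
    simp only [smul_eq_mul] at this ⊢
    have key : a * (1 - x) + b * (1 - y) = 1 - (a * x + b * y) := by linear_combination hab
    rw [key] at this
    exact this
  exact h1.add h2

lemma charpoly_conj {L : ℕ} (V D : Matrix (Fin L) (Fin L) ℝ)
    (hUV : V * star V = 1) :
    (V * D * star V).charpoly = D.charpoly := by
  have key : charmatrix (V * D * star V) =
      (C : ℝ →+* ℝ[X]).mapMatrix V * charmatrix D * (C : ℝ →+* ℝ[X]).mapMatrix (star V) := by
    rw [charmatrix, charmatrix, mul_sub, sub_mul]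
    congr 1
    · have hc : Commute (Matrix.scalar (Fin L) (X : ℝ[X]))
          ((C : ℝ →+* ℝ[X]).mapMatrix (star V)) :=
        Matrix.scalar_commute _ (fun r' => Commute.all _ _) _
      rw [mul_assoc, hc.eq, ← mul_assoc, ← _root_.map_mul, hUV]
      simp
    · rw [← _root_.map_mul, ← _root_.map_mul]
  have h4 : ((C : ℝ →+* ℝ[X]).mapMatrix V).det * ((C : ℝ →+* ℝ[X]).mapMatrix (star V)).det = 1 := by
    rw [← det_mul, ← _root_.map_mul, hUV]
    simp
  rw [Matrix.charpoly, Matrix.charpoly, key, det_mul, det_mul]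
  linear_combination D.charmatrix.det * h4

lemma charpoly_eq_prod {L : ℕ} {A : Matrix (Fin L) (Fin L) ℝ}
    (U : Matrix.unitaryGroup (Fin L) ℝ) (d : Fin L → ℝ)
    (hdecomp : A = (U : Matrix (Fin L) (Fin L) ℝ) * diagonal d
      * star (U : Matrix (Fin L) (Fin L) ℝ)) :
    A.charpoly = ∏ i, (X - C (d i)) := by
  rw [hdecomp, charpoly_conj _ _ (Matrix.mem_unitaryGroup_iff.mp U.2),
    charpoly_of_upperTriangular _ (blockTriangular_diagonal d)]
  simp

lemma eigenvalues_multiset {L : ℕ} {A : Matrix (Fin L) (Fin L) ℝ} (hA : A.IsHermitian)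
    (U : Matrix.unitaryGroup (Fin L) ℝ) (d : Fin L → ℝ)
    (hdecomp : A = (U : Matrix (Fin L) (Fin L) ℝ) * diagonal d
      * star (U : Matrix (Fin L) (Fin L) ℝ)) :
    Finset.univ.val.map hA.eigenvalues = Finset.univ.val.map d := by
  have h1 : A.charpoly = ∏ i, (X - C (hA.eigenvalues i)) := by
    refine charpoly_eq_prod hA.eigenvectorUnitary hA.eigenvalues ?_
    have := hA.spectral_theorem
    simpa [RCLike.ofReal_real_eq_id] using this
  have h2 := charpoly_eq_prod U d hdecomp
  have h3 : (∏ i, (X - C (hA.eigenvalues i))) = ∏ i, (X - C (d i)) := by rw [← h1, h2]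
  have r1 := Polynomial.roots_multiset_prod_X_sub_C (Finset.univ.val.map hA.eigenvalues)
  have r2 := Polynomial.roots_multiset_prod_X_sub_C (Finset.univ.val.map d)
  rw [Multiset.map_map] at r1 r2
  rw [← r1, ← r2]
  exact congrArg Polynomial.roots h3

lemma sum_comp_eigenvalues {L : ℕ} {A : Matrix (Fin L) (Fin L) ℝ} (hA : A.IsHermitian)
    (U : Matrix.unitaryGroup (Fin L) ℝ) (d : Fin L → ℝ)
    (hdecomp : A = (U : Matrix (Fin L) (Fin L) ℝ) * diagonal d
      * star (U : Matrix (Fin L) (Fin L) ℝ))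
    (g : ℝ → ℝ) :
    ∑ i, g (hA.eigenvalues i) = ∑ i, g (d i) := by
  have h := eigenvalues_multiset hA U d hdecomp
  have e1 : ∑ i, g (hA.eigenvalues i) = ((Finset.univ.val.map hA.eigenvalues).map g).sum := by
    rw [Multiset.map_map]; rfl
  have e2 : ∑ i, g (d i) = ((Finset.univ.val.map d).map g).sum := by
    rw [Multiset.map_map]; rfl
  rw [e1, e2, h]

lemma trace_conj {L : ℕ} (V B : Matrix (Fin L) (Fin L) ℝ) (hVU : star V * V = 1) :
    (V * B * star V).trace = B.trace := by
  rw [Matrix.trace_mul_cycle, hVU, Matrix.one_mul]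

lemma trace_diagonal_mul' {L : ℕ} (d : Fin L → ℝ) (B : Matrix (Fin L) (Fin L) ℝ) :
    (diagonal d * B).trace = ∑ i, d i * B i i := by
  rw [Matrix.trace]
  exact Finset.sum_congr rfl fun i _ => by rw [Matrix.diag, Matrix.diagonal_mul]

end Aux

/-- The minimum of the electronic free energy equals −Tr(h_θ(T²)), the latter
computed via the eigenvalues of T (the eigenvalues of T² are their squares). -/
theorem free_energy_value (L : ℕ) (θ : ℝ) (hθ : 0 < θ)
    (T : Matrix (Fin L) (Fin L) ℝ) (hT : T.IsHermitian)
    (htr : T.trace = 0)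
    (hsym : ∀ lam : ℝ, lam ∈ spectrum ℝ T → -lam ∈ spectrum ℝ T) :
    IsLeast
      {E : ℝ | ∃ (γ : Matrix (Fin L) (Fin L) ℝ) (hγ : γ.IsHermitian),
        γ.PosSemidef ∧ (1 - γ).PosSemidef ∧
        E = 2 * ((T * γ).trace + θ * trEnt γ hγ)}
      (-(∑ i, hθfun θ ((hT.eigenvalues i) ^ 2))) := by
  classical
  set lam := hT.eigenvalues with hlam
  set U : Matrix.unitaryGroup (Fin L) ℝ := hT.eigenvectorUnitary with hUdef
  have hUU : (U : Matrix (Fin L) (Fin L) ℝ) * star (U : Matrix (Fin L) (Fin L) ℝ) = 1 :=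
    Matrix.mem_unitaryGroup_iff.mp U.2
  have hUU' : star (U : Matrix (Fin L) (Fin L) ℝ) * (U : Matrix (Fin L) (Fin L) ℝ) = 1 :=
    Matrix.mem_unitaryGroup_iff'.mp U.2
  have hspec : T = (U : Matrix (Fin L) (Fin L) ℝ) * diagonal lam
      * star (U : Matrix (Fin L) (Fin L) ℝ) := by
    have := hT.spectral_theorem
    simpa [RCLike.ofReal_real_eq_id] using this
  have htrsum : ∑ i, lam i = 0 := by
    have h : T.trace = ∑ i, lam i := by
      conv_lhs => rw [hspec]
      rw [trace_conj _ _ hUU', Matrix.trace_diagonal]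
    rw [htr] at h
    exact h.symm
  have hval : -(∑ i, hθfun θ (lam i ^ 2)) =
      ∑ i, (-2 * θ * Real.log (1 + Real.exp (-lam i / θ))) := by
    rw [Finset.sum_congr rfl fun i _ => hθfun_sq θ (lam i) hθ, Finset.sum_add_distrib,
      htrsum, zero_add, ← Finset.sum_neg_distrib]
    exact Finset.sum_congr rfl fun i _ => by ring
  constructor
  · -- membership : the Fermi–Dirac state attains the value
    set q : Fin L → ℝ := fun i => 1 / (1 + Real.exp (lam i / θ)) with hqdef
    have hq0 : ∀ i, 0 < q i := fun i => by rw [hqdef]; positivity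
    have hq1 : ∀ i, q i < 1 := fun i => by
      rw [hqdef]
      simp only
      rw [div_lt_one (by positivity)]
      have := Real.exp_pos (lam i / θ); linarith
    set γ0 : Matrix (Fin L) (Fin L) ℝ :=
      (U : Matrix (Fin L) (Fin L) ℝ) * diagonal q * star (U : Matrix (Fin L) (Fin L) ℝ)
      with hγ0def
    have hD : Matrix.PosSemidef (diagonal q) :=
      Matrix.posSemidef_diagonal_iff.mpr fun i => (hq0 i).le
    have hPSD : γ0.PosSemidef := by
      rw [hγ0def]
      exact hD.mul_mul_conjTranspose_same _
    have hγ0H : γ0.IsHermitian := hPSD.1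
    have h1γ0 : (1 : Matrix (Fin L) (Fin L) ℝ) - γ0 =
        (U : Matrix (Fin L) (Fin L) ℝ) * diagonal (fun i => 1 - q i)
        * star (U : Matrix (Fin L) (Fin L) ℝ) := by
      have hd : diagonal (fun i => 1 - q i) = 1 - diagonal q := by
        rw [← diagonal_one, diagonal_sub]
      rw [hd, Matrix.mul_sub, Matrix.sub_mul, Matrix.mul_one, hUU]
    have hPSD1 : ((1 : Matrix (Fin L) (Fin L) ℝ) - γ0).PosSemidef := by
      rw [h1γ0]
      exact (Matrix.posSemidef_diagonal_iff.mpr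
        fun i => sub_nonneg.mpr (hq1 i).le).mul_mul_conjTranspose_same _
    refine ⟨γ0, hγ0H, hPSD, hPSD1, ?_⟩
    have htrace : (T * γ0).trace = ∑ i, lam i * q i := by
      have hTγ : T * γ0 = (U : Matrix (Fin L) (Fin L) ℝ) * (diagonal lam * diagonal q)
          * star (U : Matrix (Fin L) (Fin L) ℝ) := by
        rw [hspec, hγ0def]
        simp only [Matrix.mul_assoc]
        congr 2
        rw [← Matrix.mul_assoc (star (U : Matrix (Fin L) (Fin L) ℝ)), hUU', Matrix.one_mul]
      rw [hTγ, trace_conj _ _ hUU', diagonal_mul_diagonal, Matrix.trace_diagonal]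
    have hent : trEnt γ0 hγ0H = ∑ i, entS (q i) := by
      have : trEnt γ0 hγ0H = ∑ i, entS (hγ0H.eigenvalues i) := rfl
      rw [this]
      exact sum_comp_eigenvalues hγ0H U q hγ0def entS
    rw [htrace, hent, hval]
    have hterm : ∀ i : Fin L, (-2 * θ * Real.log (1 + Real.exp (-lam i / θ)))
        = 2 * (lam i * q i + θ * entS (q i)) := fun i => by
      have := scalar_min θ (lam i) hθ
      rw [hqdef]
      simp only
      linarith
    rw [Finset.sum_congr rfl fun i _ => hterm i, ← Finset.mul_sum, Finset.sum_add_distrib,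
      ← Finset.mul_sum]
  · -- lower bound
    rintro E ⟨γ, hγ, hpsd, hpsd1, rfl⟩
    set μ := hγ.eigenvalues with hμdef
    set V : Matrix.unitaryGroup (Fin L) ℝ := hγ.eigenvectorUnitary with hVdef
    have hVV : (V : Matrix (Fin L) (Fin L) ℝ) * star (V : Matrix (Fin L) (Fin L) ℝ) = 1 :=
      Matrix.mem_unitaryGroup_iff.mp V.2
    have hVV' : star (V : Matrix (Fin L) (Fin L) ℝ) * (V : Matrix (Fin L) (Fin L) ℝ) = 1 :=
      Matrix.mem_unitaryGroup_iff'.mp V.2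
    have hγdec : γ = (V : Matrix (Fin L) (Fin L) ℝ) * diagonal μ
        * star (V : Matrix (Fin L) (Fin L) ℝ) := by
      have := hγ.spectral_theorem
      simpa [RCLike.ofReal_real_eq_id] using this
    have hμ0 : ∀ j, 0 ≤ μ j := fun j => hpsd.eigenvalues_nonneg j
    have hμ1 : ∀ j, μ j ≤ 1 := by
      have h1 : (1 : Matrix (Fin L) (Fin L) ℝ) - γ =
          (V : Matrix (Fin L) (Fin L) ℝ) * diagonal (fun j => 1 - μ j)
          * star (V : Matrix (Fin L) (Fin L) ℝ) := by
        have hd : diagonal (fun j => 1 - μ j) = 1 - diagonal μ := by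
          rw [← diagonal_one, diagonal_sub]
        rw [hd, Matrix.mul_sub, Matrix.sub_mul, Matrix.mul_one, hVV, hγdec]
      have h2 : Matrix.PosSemidef (diagonal (fun j => 1 - μ j)) := by
        have h3 := hpsd1.mul_mul_conjTranspose_same (star (V : Matrix (Fin L) (Fin L) ℝ))
        rw [h1] at h3
        have key : star (V : Matrix (Fin L) (Fin L) ℝ)
            * ((V : Matrix (Fin L) (Fin L) ℝ) * diagonal (fun j => 1 - μ j)
              * star (V : Matrix (Fin L) (Fin L) ℝ))
            * (star (V : Matrix (Fin L) (Fin L) ℝ))ᴴ = diagonal (fun j => 1 - μ j) := by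
          rw [← Matrix.star_eq_conjTranspose, star_star]
          simp only [Matrix.mul_assoc, hVV', Matrix.mul_one]
          rw [← Matrix.mul_assoc, hVV', Matrix.one_mul]
        rw [key] at h3
        exact h3
      intro j
      have := Matrix.posSemidef_diagonal_iff.mp h2 j
      linarith
    set W : Matrix (Fin L) (Fin L) ℝ :=
      star (U : Matrix (Fin L) (Fin L) ℝ) * (V : Matrix (Fin L) (Fin L) ℝ) with hWdef
    have hWW : W * star W = 1 := by
      have e : W * star W = star (U : Matrix (Fin L) (Fin L) ℝ)
          * ((V : Matrix (Fin L) (Fin L) ℝ) * star (V : Matrix (Fin L) (Fin L) ℝ))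
          * (U : Matrix (Fin L) (Fin L) ℝ) := by
        rw [hWdef, StarMul.star_mul, star_star]
        simp only [Matrix.mul_assoc]
      rw [e, hVV, Matrix.mul_one, hUU']
    have hWW' : star W * W = 1 := by
      have e : star W * W = star (V : Matrix (Fin L) (Fin L) ℝ)
          * ((U : Matrix (Fin L) (Fin L) ℝ) * star (U : Matrix (Fin L) (Fin L) ℝ))
          * (V : Matrix (Fin L) (Fin L) ℝ) := by
        rw [hWdef, StarMul.star_mul, star_star]
        simp only [Matrix.mul_assoc]
      rw [e, hUU, Matrix.mul_one, hVV']
    set w : Fin L → Fin L → ℝ := fun i j => (W i j) ^ 2 with hwdef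
    have hwrow : ∀ i, ∑ j, w i j = 1 := fun i => by
      have h := congrFun (congrFun hWW i) i
      rw [Matrix.mul_apply] at h
      simp only [Matrix.star_apply, star_trivial, Matrix.one_apply_eq] at h
      rw [← h]
      exact Finset.sum_congr rfl fun j _ => by rw [hwdef]; ring
    have hwcol : ∀ j, ∑ i, w i j = 1 := fun j => by
      have h := congrFun (congrFun hWW' j) j
      rw [Matrix.mul_apply] at h
      simp only [Matrix.star_apply, star_trivial, Matrix.one_apply_eq] at h
      rw [← h]
      exact Finset.sum_congr rfl fun i _ => by rw [hwdef]; ring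
    set dvec : Fin L → ℝ := fun i => ∑ j, w i j * μ j with hdvecdef
    have hw0 : ∀ i j, 0 ≤ w i j := fun i j => by rw [hwdef]; positivity
    have hd0 : ∀ i, 0 ≤ dvec i := fun i =>
      Finset.sum_nonneg fun j _ => mul_nonneg (hw0 i j) (hμ0 j)
    have hd1 : ∀ i, dvec i ≤ 1 := fun i => by
      calc dvec i ≤ ∑ j, w i j * 1 :=
            Finset.sum_le_sum fun j _ => mul_le_mul_of_nonneg_left (hμ1 j) (hw0 i j)
        _ = 1 := by simp only [mul_one]; exact hwrow i
    have htrace : (T * γ).trace = ∑ i, lam i * dvec i := by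
      have hTγ : T * γ = (U : Matrix (Fin L) (Fin L) ℝ)
          * (diagonal lam * (W * diagonal μ * star W))
          * star (U : Matrix (Fin L) (Fin L) ℝ) := by
        rw [hspec, hγdec, hWdef]
        simp only [StarMul.star_mul, star_star, Matrix.mul_assoc, hUU, Matrix.mul_one]
      rw [hTγ, trace_conj _ _ hUU', trace_diagonal_mul']
      refine Finset.sum_congr rfl fun i _ => ?_
      congr 1
      rw [Matrix.mul_apply, hdvecdef]
      refine Finset.sum_congr rfl fun j _ => ?_
      rw [Matrix.mul_diagonal, Matrix.star_apply, star_trivial, hwdef]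
      ring
    have hsimplex : ∀ i, entS (dvec i) ≤ ∑ j, w i j * entS (μ j) := fun i => by
      have h := entS_convexOn.map_sum_le (t := Finset.univ) (w := w i) (p := μ)
        (fun j _ => hw0 i j) (hwrow i) (fun j _ => ⟨hμ0 j, hμ1 j⟩)
      simpa [smul_eq_mul, hdvecdef] using h
    have hentsum : ∑ i, entS (dvec i) ≤ trEnt γ hγ := by
      have htE : trEnt γ hγ = ∑ j, entS (μ j) := rfl
      rw [htE]
      calc ∑ i, entS (dvec i) ≤ ∑ i, ∑ j, w i j * entS (μ j) :=
            Finset.sum_le_sum fun i _ => hsimplex i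
        _ = ∑ j, (∑ i, w i j) * entS (μ j) := by
            rw [Finset.sum_comm]
            exact Finset.sum_congr rfl fun j _ => (Finset.sum_mul _ _ _).symm
        _ = ∑ j, entS (μ j) :=
            Finset.sum_congr rfl fun j _ => by rw [hwcol j, one_mul]
    rw [hval, htrace]
    have step1 : ∑ i, (-2 * θ * Real.log (1 + Real.exp (-lam i / θ)))
        ≤ ∑ i, 2 * (lam i * dvec i + θ * entS (dvec i)) :=
      Finset.sum_le_sum fun i _ => by
        have := scalar_lb θ (lam i) (dvec i) hθ (hd0 i) (hd1 i)
        linarith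
    have step2 : ∑ i, 2 * (lam i * dvec i + θ * entS (dvec i))
        = 2 * (∑ i, lam i * dvec i) + 2 * θ * (∑ i, entS (dvec i)) := by
      rw [← Finset.mul_sum, Finset.sum_add_distrib, ← Finset.mul_sum]
      ring
    have step3 : 2 * θ * (∑ i, entS (dvec i)) ≤ 2 * θ * trEnt γ hγ :=
      mul_le_mul_of_nonneg_left hentsum (by positivity)
    linarith
end

section
/- As θ → 0⁺, for fixed W > 0, the integral I(θ) := ∫₀^{π/2} tanh((W/θ)·sin s)·(cos²s/sin s) ds satisfies I(θ) = ln(W/θ) + c₂ + o(1), where c₂ = ∫₀¹ tanh(u)/u du + ∫₁^∞ (tanh(u)−1)/u du + ln 2 − 1. -/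
open Real Filter Topology MeasureTheory intervalIntegral
open Set

lemma my_continuous_tanh : Continuous Real.tanh := by
  have : Real.tanh = fun x => Real.sinh x / Real.cosh x := funext fun x => Real.tanh_eq_sinh_div_cosh x
  rw [this]
  exact Real.continuous_sinh.div Real.continuous_cosh fun x => (Real.cosh_pos x).ne'

lemma my_tanh_nonneg {x : ℝ} (hx : 0 ≤ x) : 0 ≤ Real.tanh x := by
  rw [Real.tanh_eq_sinh_div_cosh]
  exact div_nonneg (Real.sinh_nonneg_iff.mpr hx) (Real.cosh_pos x).le

lemma my_tanh_lt_one (x : ℝ) : Real.tanh x < 1 := by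
  rw [Real.tanh_eq_sinh_div_cosh, div_lt_one (Real.cosh_pos x)]
  exact Real.sinh_lt_cosh x

lemma my_tanh_le_self {x : ℝ} (hx : 0 ≤ x) : Real.tanh x ≤ x := by
  have h1 : Real.sinh x ≤ x * Real.cosh x := by
    have : Real.sinh x = ∫ t in (0:ℝ)..x, Real.cosh t := by
      rw [intervalIntegral.integral_eq_sub_of_hasDerivAt (fun t _ => Real.hasDerivAt_sinh t)
        (Real.continuous_cosh.intervalIntegrable _ _)]
      simp
    rw [this]
    calc ∫ t in (0:ℝ)..x, Real.cosh t ≤ ∫ t in (0:ℝ)..x, Real.cosh x := by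
          apply intervalIntegral.integral_mono_on hx
            (Real.continuous_cosh.intervalIntegrable _ _) (intervalIntegrable_const)
          intro t ht
          exact Real.cosh_le_cosh.mpr (by rw [abs_of_nonneg ht.1, abs_of_nonneg hx]; exact ht.2)
      _ = x * Real.cosh x := by simp
  rw [Real.tanh_eq_sinh_div_cosh, div_le_iff₀ (Real.cosh_pos x)]
  linarith

lemma my_one_sub_tanh_le {x : ℝ} (hx : 0 ≤ x) : 1 - Real.tanh x ≤ 2 * Real.exp (-(2 * x)) := by
  have hc := Real.cosh_pos x
  have h1 : 1 - Real.tanh x = Real.exp (-x) / Real.cosh x := by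
    have hcs : Real.cosh x - Real.sinh x = Real.exp (-x) := by
      rw [Real.cosh_eq, Real.sinh_eq]; ring
    rw [Real.tanh_eq_sinh_div_cosh]
    field_simp
    exact hcs
  have h2 : Real.exp x / 2 ≤ Real.cosh x := by
    rw [Real.cosh_eq]
    have := (Real.exp_pos (-x)).le
    linarith
  rw [h1]
  calc Real.exp (-x) / Real.cosh x ≤ Real.exp (-x) / (Real.exp x / 2) :=
        div_le_div_of_nonneg_left (Real.exp_pos _).le (by positivity) h2
    _ = 2 * Real.exp (-(2 * x)) := by
        rw [div_div_eq_mul_div, div_eq_iff (Real.exp_pos _).ne', mul_assoc, ← Real.exp_add]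
        ring_nf

lemma my_tendsto_tanh : Tendsto Real.tanh atTop (𝓝 1) := by
  have h0 : Tendsto (fun x : ℝ => 1 - 2 * Real.exp (-(2 * x))) atTop (𝓝 1) := by
    have : Tendsto (fun x : ℝ => Real.exp (-(2 * x))) atTop (𝓝 0) := by
      apply Real.tendsto_exp_atBot.comp
      exact tendsto_neg_atTop_atBot.comp (tendsto_id.const_mul_atTop (by norm_num : (0:ℝ) < 2))
    simpa using tendsto_const_nhds.sub (this.const_mul 2)
  apply tendsto_of_tendsto_of_tendsto_of_le_of_le' h0 tendsto_const_nhds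
  · filter_upwards [eventually_ge_atTop (0:ℝ)] with x hx
    linarith [my_one_sub_tanh_le hx]
  · filter_upwards with x
    exact (my_tanh_lt_one x).le

lemma my_sqrt_integral :
    ∫ x in (0:ℝ)..1, (-x / (1 + Real.sqrt (1 - x ^ 2))) = Real.log 2 - 1 := by
  have hden : ∀ x : ℝ, (0:ℝ) < 1 + Real.sqrt (1 - x ^ 2) := fun x => by positivity
  have hsq : Continuous fun x : ℝ => Real.sqrt (1 - x ^ 2) :=
    (continuous_const.sub (continuous_pow 2)).sqrt
  have hgcont : Continuous fun x : ℝ => -x / (1 + Real.sqrt (1 - x ^ 2)) :=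
    (continuous_neg).div (continuous_const.add hsq) fun x => (hden x).ne'
  have hFcont : Continuous fun x : ℝ =>
      Real.sqrt (1 - x ^ 2) - Real.log (1 + Real.sqrt (1 - x ^ 2)) := by
    apply hsq.sub
    rw [continuous_iff_continuousAt]
    intro x
    exact ContinuousAt.comp (g := Real.log) (f := fun x : ℝ => 1 + Real.sqrt (1 - x ^ 2))
      (Real.continuousAt_log (hden x).ne') ((continuous_const.add hsq).continuousAt)
  have hderiv : ∀ x ∈ Ioo (0:ℝ) 1,
      HasDerivAt (fun x : ℝ => Real.sqrt (1 - x ^ 2) - Real.log (1 + Real.sqrt (1 - x ^ 2)))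
        (-x / (1 + Real.sqrt (1 - x ^ 2))) x := by
    intro x hx
    have hx2 : (0:ℝ) < 1 - x ^ 2 := by nlinarith [hx.1, hx.2]
    set u := Real.sqrt (1 - x ^ 2) with hu
    have hupos : 0 < u := Real.sqrt_pos.mpr hx2
    have h1 : HasDerivAt (fun x : ℝ => 1 - x ^ 2) (-(2 * x)) x := by
      simpa using (hasDerivAt_pow 2 x).const_sub 1
    have h2 : HasDerivAt (fun y : ℝ => Real.sqrt y) (1 / (2 * u)) (1 - x ^ 2) :=
      Real.hasDerivAt_sqrt hx2.ne'
    have hu' : HasDerivAt (fun x : ℝ => Real.sqrt (1 - x ^ 2)) (1 / (2 * u) * -(2 * x)) x :=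
      h2.comp x h1
    have h3 : HasDerivAt (fun x : ℝ => Real.log (1 + Real.sqrt (1 - x ^ 2)))
        ((1 + u)⁻¹ * (1 / (2 * u) * -(2 * x))) x :=
      by have := (Real.hasDerivAt_log (hden x).ne').comp x (hu'.const_add 1); exact this
    have := hu'.sub h3
    refine HasDerivAt.congr_deriv this ?_
    have h1u : (1 + u) ≠ 0 := (hden x).ne'
    field_simp
    ring
  have hint : IntervalIntegrable (fun x : ℝ => -x / (1 + Real.sqrt (1 - x ^ 2))) volume 0 1 :=
    hgcont.intervalIntegrable _ _
  rw [intervalIntegral.integral_eq_sub_of_hasDerivAt_of_le zero_le_one hFcont.continuousOn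
    hderiv hint]
  norm_num

lemma my_sin_image : Real.sin '' Ioo 0 (π / 2) = Ioo (0:ℝ) 1 := by
  ext y
  constructor
  · rintro ⟨s, hs, rfl⟩
    refine ⟨Real.sin_pos_of_pos_of_lt_pi hs.1 (hs.2.trans (by linarith [Real.pi_pos])), ?_⟩
    have := Real.strictMonoOn_sin (Set.mem_Icc.mpr ⟨by linarith [Real.pi_pos, hs.1], hs.2.le⟩)
      (Set.mem_Icc.mpr ⟨by linarith [Real.pi_pos], le_refl _⟩) hs.2
    simpa using this
  · intro hy
    refine ⟨Real.arcsin y, ⟨Real.arcsin_pos.mpr hy.1, Real.arcsin_lt_pi_div_two.mpr hy.2⟩, ?_⟩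
    exact Real.sin_arcsin (by linarith [hy.1]) hy.2.le

lemma my_subst (a : ℝ) :
    (∫ s in (0:ℝ)..(π / 2), Real.tanh (a * Real.sin s) * (Real.cos s ^ 2 / Real.sin s))
      = ∫ x in Ioo (0:ℝ) 1, Real.tanh (a * x) * (Real.sqrt (1 - x ^ 2) / x) := by
  have hpi := Real.pi_pos
  have hder : ∀ s ∈ Ioo (0:ℝ) (π / 2),
      HasDerivWithinAt Real.sin (Real.cos s) (Ioo (0:ℝ) (π / 2)) s :=
    fun s _ => (Real.hasDerivAt_sin s).hasDerivWithinAt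
  have hinj : InjOn Real.sin (Ioo (0:ℝ) (π / 2)) :=
    Real.injOn_sin.mono fun s hs => Set.mem_Icc.mpr ⟨by linarith [Real.pi_pos, hs.1], hs.2.le⟩
  have key := MeasureTheory.integral_image_eq_integral_abs_deriv_smul measurableSet_Ioo hder hinj
    (fun x => Real.tanh (a * x) * (Real.sqrt (1 - x ^ 2) / x))
  rw [my_sin_image] at key
  rw [intervalIntegral.integral_of_le (by positivity : (0:ℝ) ≤ π / 2),
    MeasureTheory.integral_Ioc_eq_integral_Ioo, key]
  apply setIntegral_congr_fun measurableSet_Ioo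
  intro s hs
  have hsin : 0 < Real.sin s := Real.sin_pos_of_pos_of_lt_pi hs.1 (hs.2.trans (by linarith))
  have hcos : 0 ≤ Real.cos s :=
    Real.cos_nonneg_of_mem_Icc ⟨by linarith [hs.1], hs.2.le⟩
  have hsq : Real.sqrt (1 - Real.sin s ^ 2) = Real.cos s := by
    rw [← Real.cos_sq']
    exact Real.sqrt_sq hcos
  simp only [hsq, smul_eq_mul, abs_of_nonneg hcos]
  field_simp

lemma my_abs_tanh_le_one (x : ℝ) : |Real.tanh x| ≤ 1 := by
  rcases le_or_gt 0 x with h | h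
  · rw [abs_of_nonneg (my_tanh_nonneg h)]; exact (my_tanh_lt_one x).le
  · have h' : 0 ≤ -x := by linarith
    have : Real.tanh x = -Real.tanh (-x) := by rw [Real.tanh_neg, neg_neg]
    rw [this, abs_neg, abs_of_nonneg (my_tanh_nonneg h')]
    exact (my_tanh_lt_one (-x)).le

lemma my_abs_tanh_le_abs (x : ℝ) : |Real.tanh x| ≤ |x| := by
  rcases le_or_gt 0 x with h | h
  · rw [abs_of_nonneg (my_tanh_nonneg h), abs_of_nonneg h]; exact my_tanh_le_self h
  · have h' : 0 ≤ -x := by linarith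
    have hx : Real.tanh x = -Real.tanh (-x) := by rw [Real.tanh_neg, neg_neg]
    rw [abs_of_neg h, hx, abs_neg, abs_of_nonneg (my_tanh_nonneg h')]
    exact my_tanh_le_self h'

lemma my_f_meas : Measurable fun u : ℝ => Real.tanh u / u :=
  my_continuous_tanh.measurable.div measurable_id

lemma my_f_ii (b c : ℝ) : IntervalIntegrable (fun u : ℝ => Real.tanh u / u) volume b c := by
  rw [intervalIntegrable_iff]
  apply Measure.integrableOn_of_bounded (M := 1) measure_Ioc_lt_top.ne
    my_f_meas.aestronglyMeasurable
  filter_upwards with u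
  rcases eq_or_ne u 0 with rfl | hu
  · simp
  · rw [norm_div, div_le_one (by simpa using hu : (0:ℝ) < ‖u‖)]
    exact my_abs_tanh_le_abs u

lemma my_int1 (a : ℝ) (ha : 0 < a) :
    IntegrableOn (fun x : ℝ => Real.tanh (a * x) / x) (Ioo 0 1) := by
  apply Measure.integrableOn_of_bounded (M := a) (by simp)
  · exact ((my_continuous_tanh.comp (continuous_const.mul continuous_id)).measurable.div
      measurable_id).aestronglyMeasurable
  · rw [ae_restrict_iff' measurableSet_Ioo]
    filter_upwards with x hx
    have hx0 := hx.1
    rw [Real.norm_eq_abs, abs_div, abs_of_pos hx0, div_le_iff₀ hx0]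
    calc |Real.tanh (a * x)| ≤ |a * x| := my_abs_tanh_le_abs _
      _ = a * x := abs_of_pos (by positivity)

lemma my_int2 (a : ℝ) :
    IntegrableOn (fun x : ℝ => Real.tanh (a * x) * (-x / (1 + Real.sqrt (1 - x ^ 2))))
      (Ioo 0 1) := by
  apply Measure.integrableOn_of_bounded (M := 1) (by simp)
  · apply Continuous.aestronglyMeasurable
    apply (my_continuous_tanh.comp (continuous_const.mul continuous_id)).mul
    exact continuous_neg.div
      (continuous_const.add (continuous_const.sub (continuous_pow 2)).sqrt)
      fun x => by positivity
  · rw [ae_restrict_iff' measurableSet_Ioo]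
    filter_upwards with x hx
    rw [Real.norm_eq_abs, abs_mul]
    have h1 : |(-x / (1 + Real.sqrt (1 - x ^ 2)))| ≤ 1 := by
      rw [abs_div, div_le_one (by positivity)]
      rw [abs_neg, abs_of_pos hx.1, abs_of_pos (by positivity)]
      have := Real.sqrt_nonneg (1 - x ^ 2)
      linarith [hx.2.le]
    calc |Real.tanh (a * x)| * |(-x / (1 + Real.sqrt (1 - x ^ 2)))|
        ≤ 1 * 1 := mul_le_mul (my_abs_tanh_le_one _) h1 (abs_nonneg _) zero_le_one
      _ = 1 := one_mul 1

lemma my_scale (a : ℝ) (ha : 0 < a) :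
    (∫ x in Ioo (0:ℝ) 1, Real.tanh (a * x) / x) = ∫ u in (0:ℝ)..a, Real.tanh u / u := by
  have heq : ∀ x : ℝ, Real.tanh (a * x) / x = a • ((fun u => Real.tanh u / u) (a * x)) := by
    intro x
    rcases eq_or_ne x 0 with rfl | hx
    · simp
    · simp only [smul_eq_mul]
      field_simp
  rw [← MeasureTheory.integral_Ioc_eq_integral_Ioo,
    ← intervalIntegral.integral_of_le zero_le_one]
  calc (∫ x in (0:ℝ)..1, Real.tanh (a * x) / x)
      = ∫ x in (0:ℝ)..1, a • ((fun u => Real.tanh u / u) (a * x)) :=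
        intervalIntegral.integral_congr fun x _ => heq x
    _ = a • ∫ x in (0:ℝ)..1, (fun u => Real.tanh u / u) (a * x) := intervalIntegral.integral_smul _ _
    _ = ∫ u in (a * 0)..(a * 1), Real.tanh u / u := by
        exact intervalIntegral.smul_integral_comp_mul_left (fun u => Real.tanh u / u) a
    _ = ∫ u in (0:ℝ)..a, Real.tanh u / u := by norm_num

lemma my_split (a : ℝ) (ha : 0 < a) :
    (∫ x in Ioo (0:ℝ) 1, Real.tanh (a * x) * (Real.sqrt (1 - x ^ 2) / x))
      = (∫ u in (0:ℝ)..a, Real.tanh u / u)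
        + ∫ x in Ioo (0:ℝ) 1, Real.tanh (a * x) * (-x / (1 + Real.sqrt (1 - x ^ 2))) := by
  have heq : ∀ x ∈ Ioo (0:ℝ) 1,
      Real.tanh (a * x) * (Real.sqrt (1 - x ^ 2) / x)
        = Real.tanh (a * x) / x
          + Real.tanh (a * x) * (-x / (1 + Real.sqrt (1 - x ^ 2))) := by
    intro x hx
    have hx2 : (0:ℝ) ≤ 1 - x ^ 2 := by nlinarith [hx.1, hx.2]
    set u := Real.sqrt (1 - x ^ 2) with hu
    have hu2 : u ^ 2 = 1 - x ^ 2 := Real.sq_sqrt hx2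
    have hunn : 0 ≤ u := Real.sqrt_nonneg _
    have hden : (0:ℝ) < 1 + u := by linarith
    have key : u / x = 1 / x + -x / (1 + u) := by
      field_simp [hx.1.ne', hden.ne']
      linear_combination hu2
    rw [key]
    ring
  rw [MeasureTheory.setIntegral_congr_fun measurableSet_Ioo heq,
    MeasureTheory.integral_add (my_int1 a ha) (my_int2 a), my_scale a ha]

lemma my_tail_integrable :
    IntegrableOn (fun u : ℝ => (Real.tanh u - 1) / u) (Ioi 1) := by
  have hg : IntegrableOn (fun u : ℝ => 2 * Real.exp (-(2 * u))) (Ioi 1) := by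
    simpa [mul_comm, IntegrableOn] using (exp_neg_integrableOn_Ioi 1 (by norm_num : (0:ℝ) < 2)).const_mul 2
  apply Integrable.mono hg
  · exact (((my_continuous_tanh.sub continuous_const).measurable).div
      measurable_id).aestronglyMeasurable.restrict
  · rw [ae_restrict_iff' measurableSet_Ioi]
    filter_upwards with u hu
    have hu1 : (1:ℝ) ≤ u := le_of_lt hu
    have ht1 : Real.tanh u < 1 := my_tanh_lt_one u
    have hb := my_one_sub_tanh_le (le_trans zero_le_one hu1)
    rw [Real.norm_eq_abs, Real.norm_eq_abs, abs_div, abs_of_nonneg (by linarith : (0:ℝ) ≤ u),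
      abs_of_neg (by linarith : Real.tanh u - 1 < 0),
      abs_of_pos (by positivity : (0:ℝ) < 2 * Real.exp (-(2 * u)))]
    calc -(Real.tanh u - 1) / u ≤ -(Real.tanh u - 1) / 1 := by
          apply div_le_div_of_nonneg_left (by linarith) one_pos hu1
      _ = 1 - Real.tanh u := by ring
      _ ≤ 2 * Real.exp (-(2 * u)) := hb

lemma my_tendsto_A :
    Tendsto (fun a : ℝ => ∫ u in (1:ℝ)..a, (Real.tanh u - 1) / u) atTop
      (𝓝 (∫ u in Ioi (1:ℝ), (Real.tanh u - 1) / u)) :=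
  MeasureTheory.intervalIntegral_tendsto_integral_Ioi 1 my_tail_integrable tendsto_id

lemma my_tendsto_B :
    Tendsto (fun a : ℝ => ∫ x in Ioo (0:ℝ) 1,
        Real.tanh (a * x) * (-x / (1 + Real.sqrt (1 - x ^ 2)))) atTop
      (𝓝 (Real.log 2 - 1)) := by
  have hlim : (∫ x in Ioo (0:ℝ) 1, -x / (1 + Real.sqrt (1 - x ^ 2))) = Real.log 2 - 1 := by
    rw [← MeasureTheory.integral_Ioc_eq_integral_Ioo, ← intervalIntegral.integral_of_le zero_le_one]
    exact my_sqrt_integral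
  rw [← hlim]
  apply MeasureTheory.tendsto_integral_filter_of_dominated_convergence
    (bound := fun _ : ℝ => (1:ℝ))
  · filter_upwards with a
    apply Continuous.aestronglyMeasurable
    apply (my_continuous_tanh.comp (continuous_const.mul continuous_id)).mul
    exact continuous_neg.div
      (continuous_const.add (continuous_const.sub (continuous_pow 2)).sqrt)
      fun x => by positivity
  · filter_upwards with a
    rw [ae_restrict_iff' measurableSet_Ioo]
    filter_upwards with x hx
    rw [Real.norm_eq_abs, abs_mul]
    have h1 : |(-x / (1 + Real.sqrt (1 - x ^ 2)))| ≤ 1 := by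
      rw [abs_div, div_le_one (by positivity)]
      rw [abs_neg, abs_of_pos hx.1, abs_of_pos (by positivity)]
      have := Real.sqrt_nonneg (1 - x ^ 2)
      linarith [hx.2.le]
    calc |Real.tanh (a * x)| * |(-x / (1 + Real.sqrt (1 - x ^ 2)))|
        ≤ 1 * 1 := mul_le_mul (my_abs_tanh_le_one _) h1 (abs_nonneg _) zero_le_one
      _ = 1 := one_mul 1
  · exact integrableOn_const measure_Ioo_lt_top.ne
  · rw [ae_restrict_iff' measurableSet_Ioo]
    filter_upwards with x hx
    have hmul : Tendsto (fun a : ℝ => a * x) atTop atTop :=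
      tendsto_id.atTop_mul_const hx.1
    have := (my_tendsto_tanh.comp hmul).mul_const (-x / (1 + Real.sqrt (1 - x ^ 2)))
    simpa using this

lemma my_log_split (a : ℝ) (ha : (1:ℝ) ≤ a) :
    (∫ u in (1:ℝ)..a, Real.tanh u / u)
      = (∫ u in (1:ℝ)..a, (Real.tanh u - 1) / u) + Real.log a := by
  have e1 : ∀ u : ℝ, Real.tanh u / u = (Real.tanh u - 1) / u + 1 / u := fun u => by
    rw [← add_div, sub_add_cancel]
  have hne : ∀ u ∈ uIcc (1:ℝ) a, u ≠ 0 := by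
    intro u hu
    rw [Set.uIcc_of_le ha] at hu
    exact (lt_of_lt_of_le one_pos hu.1).ne'
  have hc1 : ContinuousOn (fun u : ℝ => (Real.tanh u - 1) / u) (uIcc (1:ℝ) a) :=
    ((my_continuous_tanh.sub continuous_const).continuousOn).div continuousOn_id hne
  have hc2 : ContinuousOn (fun u : ℝ => 1 / u) (uIcc (1:ℝ) a) :=
    continuousOn_const.div continuousOn_id hne
  rw [intervalIntegral.integral_congr (fun u _ => e1 u),
    intervalIntegral.integral_add (hc1.intervalIntegrable) (hc2.intervalIntegrable),
    integral_one_div (fun h => by simpa using hne 0 h)]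
  norm_num

lemma my_main :
    Tendsto (fun a : ℝ =>
        (∫ s in (0:ℝ)..(π / 2),
            Real.tanh (a * Real.sin s) * (Real.cos s ^ 2 / Real.sin s))
          - (Real.log a +
              ((∫ u in (0:ℝ)..1, Real.tanh u / u) +
                (∫ u in Set.Ioi (1:ℝ), (Real.tanh u - 1) / u) +
                Real.log 2 - 1)))
      atTop (𝓝 0) := by
  have hA : Tendsto (fun a : ℝ =>
      (∫ u in (1:ℝ)..a, (Real.tanh u - 1) / u)
        - ∫ u in Set.Ioi (1:ℝ), (Real.tanh u - 1) / u) atTop (𝓝 0) := by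
    simpa using my_tendsto_A.sub
      (tendsto_const_nhds (x := ∫ u in Set.Ioi (1:ℝ), (Real.tanh u - 1) / u))
  have hB : Tendsto (fun a : ℝ =>
      (∫ x in Ioo (0:ℝ) 1, Real.tanh (a * x) * (-x / (1 + Real.sqrt (1 - x ^ 2))))
        - (Real.log 2 - 1)) atTop (𝓝 0) := by
    simpa using my_tendsto_B.sub (tendsto_const_nhds (x := Real.log 2 - 1))
  refine Tendsto.congr' ?_ (by simpa using hA.add hB)
  filter_upwards [eventually_ge_atTop (1:ℝ)] with a ha
  have ha0 : (0:ℝ) < a := lt_of_lt_of_le one_pos ha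
  rw [my_subst a, my_split a ha0,
    ← intervalIntegral.integral_add_adjacent_intervals (my_f_ii 0 1) (my_f_ii 1 a),
    my_log_split a ha]
  ring

theorem I_asymptotic (W : ℝ) (hW : 0 < W) :
    Tendsto (fun θ : ℝ =>
        (∫ s in (0 : ℝ)..(π / 2),
            Real.tanh ((W / θ) * Real.sin s) * (Real.cos s ^ 2 / Real.sin s))
          - (Real.log (W / θ) +
              ((∫ u in (0 : ℝ)..1, Real.tanh u / u) +
                (∫ u in Set.Ioi (1 : ℝ), (Real.tanh u - 1) / u) +
                Real.log 2 - 1)))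
      (𝓝[>] 0) (𝓝 0) := by
  have hdiv : Tendsto (fun θ : ℝ => W / θ) (𝓝[>] (0:ℝ)) atTop := by
    simp only [div_eq_mul_inv]
    exact tendsto_inv_nhdsGT_zero.const_mul_atTop hW
  exact my_main.comp hdiv
end
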